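/- Fix d ≥ 4, 2 ≤ m < 2d−1, n̲ = (n₂,…,n_{m−1}) with n_i ≥ 2, and any λ with 2 < λ < λ_{d,n̲}. Then there exists N ≥ 2 such that for all n_m ≥ N, p_{d,(n₂,…,n_{m−1},n_m)}(λ) < 0, and hence λ < λ_{d,(n₂,…,n_{m−1},n_m)}. -/

import Mathlib

/-! For `x > 0` one has `p_{d,n̲}(x) = g(x) · ∏ (x^{n_i} + 1)` with
`g(x) = x² − (d−1)x − 1 + ∑ x / (x^{n_i} + 1)`. Each `x / (x^n + 1)` with `n ≥ 2` is convex on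
`[2, ∞)`, hence so is `g`, and `g(2) ≤ 5 − 2d + 2/5 · #n̲ < 0` when `#n̲ ≤ 2d − 4`. Since `g` vanishes
at `λ_{d,n̲}`, convexity forces `g(λ) < 0`, i.e. `p_{d,n̲}(λ) < 0`, for `2 < λ < λ_{d,n̲}`.
Appending an exponent gives `p_{d,(n̲,N)}(λ) = (λ^N + 1) p_{d,n̲}(λ) + λ ∏ (λ^{n_i} + 1)`, which is
negative for large `N`; as `p_{d,(n̲,N)}` is positive for large arguments, the intermediate value
theorem then puts a root above `λ`. -/

/-- The auxiliary polynomial `p_{d,n̲}` of the paper, evaluated at a real `x`. -/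
def pPoly (d m : ℕ) (n : ℕ → ℕ) (x : ℝ) : ℝ :=
  (x^2 - ((d : ℝ) - 1) * x - 1) * ∏ i ∈ Finset.Icc 2 m, (x^(n i) + 1)
    + x * ∑ i ∈ Finset.Icc 2 m, ∏ j ∈ (Finset.Icc 2 m).erase i, (x^(n j) + 1)

open Finset Filter

section Convexity

variable {𝕜 E β ι : Type*} [Semiring 𝕜] [PartialOrder 𝕜] [AddCommMonoid E] [SMul 𝕜 E]
  [AddCommMonoid β] [PartialOrder β] [IsOrderedAddMonoid β] [Module 𝕜 β]

theorem ConvexOn.finsetSum {s : Set E} (hs : Convex 𝕜 s) (t : Finset ι) {f : ι → E → β}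
    (hf : ∀ i ∈ t, ConvexOn 𝕜 s (f i)) : ConvexOn 𝕜 s fun x => ∑ i ∈ t, f i x := by
  classical
  induction t using Finset.induction_on with
  | empty => simpa using convexOn_const 0 hs
  | insert a t ha ih =>
    simp only [Finset.sum_insert ha]
    exact (hf a (mem_insert_self a t)).add (ih fun i hi => hf i (mem_insert_of_mem hi))

end Convexity

theorem ConvexOn.neg_of_neg_of_nonpos {s : Set ℝ} {f : ℝ → ℝ} (hf : ConvexOn ℝ s f)
    {a x b : ℝ} (ha : a ∈ s) (hb : b ∈ s) (hax : a < x) (hxb : x < b) (hfa : f a < 0)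
    (hfb : f b ≤ 0) : f x < 0 := by
  by_contra! hx
  have := hf.le_left_of_right_le'' ha hb hax.le hxb (hfb.trans hx)
  linarith

lemma convexOn_div_pow_add_one {n : ℕ} (hn : 2 ≤ n) :
    ConvexOn ℝ (Set.Ici 2) fun x : ℝ => x / (x ^ n + 1) := by
  obtain ⟨k, rfl⟩ := Nat.exists_eq_add_of_le' hn
  refine convexOn_of_hasDerivWithinAt2_nonneg (convex_Ici 2)
    (f' := fun x => (1 - (k + 1) * x ^ (k + 2)) / (x ^ (k + 2) + 1) ^ 2)
    (f'' := fun x => (k + 2) * x ^ (k + 1) * ((k + 1) * x ^ (k + 2) - (k + 3)) /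
      (x ^ (k + 2) + 1) ^ 3) ?_ ?_ ?_ ?_
  · exact continuousOn_id.div (by fun_prop) fun x (hx : 2 ≤ x) =>
      (add_pos (pow_pos (by linarith) _) one_pos).ne'
  all_goals
    rw [interior_Ici]
    intro x (hx : 2 < x)
    have hu : 0 < x ^ (k + 2) + 1 := add_pos (pow_pos (by linarith) _) one_pos
  · refine ((hasDerivAt_id' x).div ((hasDerivAt_pow _ x).add_const 1) hu.ne').hasDerivWithinAt
      |>.congr_deriv ?_
    field_simp
    push_cast
    ring
  · refine (((hasDerivAt_pow _ x).const_mul _).const_sub 1 |>.div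
      ((hasDerivAt_pow _ x).add_const 1 |>.fun_pow 2) (by positivity)).hasDerivWithinAt
      |>.congr_deriv ?_
    field_simp
    push_cast
    ring
  · have h4 : (4 : ℝ) ≤ x ^ (k + 2) := by
      calc (4 : ℝ) = 2 ^ 2 := by norm_num
        _ ≤ x ^ 2 := by gcongr
        _ ≤ x ^ (k + 2) := pow_le_pow_right₀ (by linarith) (by omega)
    have hk : (0 : ℝ) ≤ k := k.cast_nonneg
    have : (0 : ℝ) ≤ (k + 1) * x ^ (k + 2) - (k + 3) := by nlinarith
    positivity

noncomputable def pReduced (d k : ℕ) (n : ℕ → ℕ) (x : ℝ) : ℝ :=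
  x ^ 2 - ((d : ℝ) - 1) * x - 1 + ∑ i ∈ Icc 2 k, x / (x ^ (n i) + 1)

section pPoly

variable {d k : ℕ} {n : ℕ → ℕ} {x : ℝ}

lemma prod_pow_add_one_pos (hx : 0 < x) : 0 < ∏ i ∈ Icc 2 k, (x ^ (n i) + 1) :=
  prod_pos fun _ _ => by positivity

lemma pPoly_eq_pReduced_mul_prod (hx : 0 < x) :
    pPoly d k n x = pReduced d k n x * ∏ i ∈ Icc 2 k, (x ^ (n i) + 1) := by
  have h_erase : ∀ i ∈ Icc 2 k, ∏ j ∈ (Icc 2 k).erase i, (x ^ (n j) + 1)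
      = (∏ j ∈ Icc 2 k, (x ^ (n j) + 1)) / (x ^ (n i) + 1) := fun i hi => by
    rw [eq_div_iff (by positivity), prod_erase_mul _ _ hi]
  rw [pPoly, pReduced, sum_congr rfl h_erase, add_mul, sum_mul, mul_sum]
  congr 1
  exact sum_congr rfl fun i _ => by ring

lemma continuous_pPoly : Continuous (pPoly d k n) := by
  unfold pPoly
  fun_prop

lemma pPoly_pos_of_one_lt_of_le (h1 : 1 < x) (hd : (d : ℝ) ≤ x) : 0 < pPoly d k n x := by
  have hx : 0 < x := by linarith
  rw [pPoly_eq_pReduced_mul_prod hx]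
  refine mul_pos ?_ (prod_pow_add_one_pos hx)
  have : 0 ≤ ∑ i ∈ Icc 2 k, x / (x ^ (n i) + 1) := sum_nonneg fun _ _ => by positivity
  rw [pReduced]
  nlinarith

lemma convexOn_pReduced (hn : ∀ i ∈ Icc 2 k, 2 ≤ n i) :
    ConvexOn ℝ (Set.Ici 2) (pReduced d k n) := by
  refine ConvexOn.add ⟨convex_Ici 2, fun x _ y _ a b ha hb hab => ?_⟩
    (.finsetSum (convex_Ici 2) _ fun i hi => convexOn_div_pow_add_one (hn i hi))
  simp only [smul_eq_mul]
  nlinarith [mul_nonneg (mul_nonneg ha hb) (sq_nonneg (x - y))]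

lemma pReduced_two_neg (hd : 3 ≤ d) (hk : k + 3 ≤ 2 * d) (hn : ∀ i ∈ Icc 2 k, 2 ≤ n i) :
    pReduced d k n 2 < 0 := by
  have hterm : ∀ i ∈ Icc 2 k, (2 : ℝ) / (2 ^ (n i) + 1) ≤ 2 / 5 := fun i hi => by
    have : (4 : ℝ) ≤ 2 ^ (n i) := by
      calc (4 : ℝ) = 2 ^ 2 := by norm_num
        _ ≤ 2 ^ (n i) := pow_le_pow_right₀ (by norm_num) (hn i hi)
    gcongr
    linarith
  have hsum := sum_le_card_nsmul _ _ _ hterm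
  have hcard : (Icc 2 k).card + 4 ≤ 2 * d := by rw [Nat.card_Icc]; omega
  have hcard' : ((Icc 2 k).card : ℝ) + 4 ≤ 2 * d := by exact_mod_cast hcard
  have hd' : (3 : ℝ) ≤ d := by exact_mod_cast hd
  rw [nsmul_eq_mul] at hsum
  rw [pReduced]
  nlinarith

lemma pPoly_neg_of_lt_of_eq_zero (hd : 3 ≤ d) (hk : k + 3 ≤ 2 * d)
    (hn : ∀ i ∈ Icc 2 k, 2 ≤ n i) {L : ℝ} (h2x : 2 < x) (hxL : x < L) (hL : pPoly d k n L = 0) :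
    pPoly d k n x < 0 := by
  have hL0 : 0 < L := by linarith
  have hL' : pReduced d k n L = 0 :=
    (mul_eq_zero.mp ((pPoly_eq_pReduced_mul_prod hL0).symm.trans hL)).resolve_right
      (prod_pow_add_one_pos hL0).ne'
  have hx : 0 < x := by linarith
  rw [pPoly_eq_pReduced_mul_prod hx]
  refine mul_neg_of_neg_of_pos ?_ (prod_pow_add_one_pos hx)
  exact (convexOn_pReduced hn).neg_of_neg_of_nonpos Set.self_mem_Ici
    (Set.mem_Ici.mpr (by linarith)) h2x hxL (pReduced_two_neg hd hk hn) hL'.le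

lemma lt_of_pPoly_neg_of_isGreatest {L : ℝ} (hx : pPoly d k n x < 0)
    (hL : IsGreatest {y | pPoly d k n y = 0} L) : x < L := by
  set b := max x (max (d : ℝ) 2)
  have hb : 0 < pPoly d k n b :=
    pPoly_pos_of_one_lt_of_le (lt_max_of_lt_right (lt_max_of_lt_right one_lt_two)) (by simp [b])
  obtain ⟨r, hr, hr0⟩ := intermediate_value_Ioo (le_max_left x _)
    continuous_pPoly.continuousOn ⟨hx, hb⟩
  exact hr.1.trans_le (hL.2 hr0)

lemma pPoly_update (hk : 2 ≤ k) (hx : 0 < x) (N : ℕ) :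
    pPoly d k (Function.update n k N) x =
      (x ^ N + 1) * pPoly d (k - 1) n x + x * ∏ i ∈ Icc 2 (k - 1), (x ^ (n i) + 1) := by
  have hmem : k ∉ Icc 2 (k - 1) := by simp only [mem_Icc]; omega
  have hins : Icc 2 k = insert k (Icc 2 (k - 1)) := by
    ext i
    simp only [mem_Icc, mem_insert]
    omega
  have hupd : ∀ i ∈ Icc 2 (k - 1), Function.update n k N i = n i := fun i hi =>
    Function.update_of_ne (by simp only [mem_Icc] at hi; omega) _ _
  rw [pPoly_eq_pReduced_mul_prod hx, pPoly_eq_pReduced_mul_prod hx, pReduced, pReduced, hins,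
    sum_insert hmem, prod_insert hmem, Function.update_self, sum_congr rfl fun i hi => by
      rw [hupd i hi], prod_congr rfl fun i hi => by rw [hupd i hi]]
  field_simp
  ring

lemma eventually_pPoly_update_neg (hk : 2 ≤ k) (hx : 1 < x) (hneg : pPoly d (k - 1) n x < 0) :
    ∀ᶠ N in atTop, pPoly d k (Function.update n k N) x < 0 := by
  set P := ∏ i ∈ Icc 2 (k - 1), (x ^ (n i) + 1)
  filter_upwards [(tendsto_pow_atTop_atTop_of_one_lt hx).eventually_gt_atTop
    (x * P / -pPoly d (k - 1) n x)] with N hN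
  rw [div_lt_iff₀ (by linarith)] at hN
  rw [pPoly_update hk (by linarith)]
  nlinarith

end pPoly

/-- For any `2 < λ < λ_{d,n̲}` there exists `N ≥ 2` such that for all `n_m ≥ N` one
has `p_{d,(n₂,…,n_{m−1},n_m)}(λ) < 0`, hence `λ < λ_{d,(n₂,…,n_{m−1},n_m)}`. -/
theorem stmt6 (d m : ℕ) (hd : 4 ≤ d) (hm1 : 2 ≤ m) (hm2 : m < 2*d - 1)
    (n : ℕ → ℕ) (hn : ∀ i ∈ Finset.Icc 2 (m-1), 2 ≤ n i)
    (lamInf : ℝ) (hlamInf : IsGreatest {x : ℝ | pPoly d (m-1) n x = 0} lamInf)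
    (lamSeq : ℕ → ℝ)
    (hlamSeq : ∀ N, 2 ≤ N →
      IsGreatest {x : ℝ | pPoly d m (Function.update n m N) x = 0} (lamSeq N))
    (lam : ℝ) (hlam1 : 2 < lam) (hlam2 : lam < lamInf) :
    ∃ N : ℕ, 2 ≤ N ∧ ∀ nm, N ≤ nm →
      pPoly d m (Function.update n m nm) lam < 0 ∧ lam < lamSeq nm := by
  have hneg : pPoly d (m - 1) n lam < 0 :=
    pPoly_neg_of_lt_of_eq_zero (by omega) (by omega) hn hlam1 hlam2 hlamInf.1
  obtain ⟨N, hN⟩ := eventually_atTop.mp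
    (eventually_pPoly_update_neg hm1 (by linarith) hneg)
  refine ⟨max N 2, le_max_right _ _, fun nm hnm => ?_⟩
  have hneg' := hN nm (le_of_max_le_left hnm)
  exact ⟨hneg', lt_of_pPoly_neg_of_isGreatest hneg' (hlamSeq nm (le_of_max_le_right hnm))⟩
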